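/- Let x_0 = (1/3, 1/3, …, 1/3) ∈ ℝ^9, let X^{(iii)} ⊆ ℝ^9 be the set of the 72 vectors having one coordinate equal to 4/3, seven coordinates equal to 1/3, and one coordinate equal to −2/3, and let X^{(iii)}' = {(x_1,…,x_9) ∈ X^{(iii)} : x_i = 4/3 and x_j = −2/3 with i > j} (36 vectors, those in which the coordinate 4/3 occurs at a later position than the coordinate −2/3). Then J̃(9,3) ∪ {x_0} ∪ X^{(iii)}' is a maximal three-distance set in H(9,3) with exactly 121 points; moreover, every maximal three-distance set in H(9,3) containing J̃(9,3) has exactly 121 points. -/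

import Mathlib

noncomputable section

/-- The set of distances between distinct points of `S`. -/
def distSet {n : ℕ} (S : Set (EuclideanSpace ℝ (Fin n))) : Set ℝ :=
  {d | ∃ x ∈ S, ∃ y ∈ S, x ≠ y ∧ d = dist x y}

/-- `S` is an `s`-distance set: exactly `s` distances occur between distinct points. -/
def IsSDistanceSet {n : ℕ} (s : ℕ) (S : Set (EuclideanSpace ℝ (Fin n))) : Prop :=
  (distSet S).Finite ∧ (distSet S).ncard = s

/-- The representation `J̃(n,m)` of the Johnson graph `J(n,m)`: vectors with exactly `m`
coordinates equal to `1` and the rest equal to `0`. -/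
def JohnsonRep (n m : ℕ) : Set (EuclideanSpace ℝ (Fin n)) :=
  {x | (∀ i, x i = 0 ∨ x i = 1) ∧ {i : Fin n | x i = 1}.ncard = m}

/-- The hyperplane `H(n,m) = {x : ∑ x_i = m}`. -/
def Hyp (n m : ℕ) : Set (EuclideanSpace ℝ (Fin n)) :=
  {x | ∑ i, x i = (m : ℝ)}

/-- The set `X⁽ⁱⁱⁱ⁾ = (4/3, (1/3)^7, -2/3)^P ⊆ ℝ⁹`. -/
def X93 : Set (EuclideanSpace ℝ (Fin 9)) :=
  {y | {i : Fin 9 | y i = 4/3}.ncard = 1 ∧ {i : Fin 9 | y i = 1/3}.ncard = 7 ∧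
    {i : Fin 9 | y i = -2/3}.ncard = 1}

/-- `X⁽ⁱⁱⁱ⁾' ⊆ X⁽ⁱⁱⁱ⁾`: the 36 vectors in which the coordinate `4/3` occurs at a later
position than the coordinate `-2/3`. -/
def X93' : Set (EuclideanSpace ℝ (Fin 9)) :=
  {y ∈ X93 | ∃ i j : Fin 9, (j : ℕ) < (i : ℕ) ∧ y i = 4/3 ∧ y j = -2/3}

/-!
For `y ∈ H(9,3)` and a 3-set `A`, `‖y - e_A‖² = ‖y‖² + 3 - 2 ∑_{k ∈ A} y_k`. So `y` is at
distance `√2`, `2` or `√6` from every point of `J̃(9,3)` exactly when all its triple sums lie in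
`{a, a - 1, a - 2}` with `a = (‖y‖² + 1) / 2`. Comparing triples that share two indices shows
that any two coordinates differ by an integer in `[-2, 2]`; a case analysis on the gap between
the largest and smallest coordinate, using `∑ y_k = 3` and `∑ y_k² = 2a - 1`, leaves only
`x₀` and the 72 points `x₀ + e_i - e_j` of `X⁽ⁱⁱⁱ⁾`.

Among `J̃(9,3) ∪ {x₀} ∪ X⁽ⁱⁱⁱ⁾` every distance is `√2`, `2` or `√6`, except the distance `√8`
between `x₀ + e_i - e_j` and its mirror image `x₀ + e_j - e_i` in `x₀`. A maximal three-distance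
set containing `J̃(9,3)` therefore consists of `J̃(9,3)`, `x₀` and exactly one point of each of the
36 mirror pairs: `84 + 1 + 36 = 121` points, and `X⁽ⁱⁱⁱ⁾'` is one such choice.
-/

open scoped Finset

local notation "ℝ⁹" => EuclideanSpace ℝ (Fin 9)

def indicatorVec {n : ℕ} (A : Finset (Fin n)) : EuclideanSpace ℝ (Fin n) :=
  WithLp.toLp 2 fun k => if k ∈ A then 1 else 0

def root {n : ℕ} (i j : Fin n) : EuclideanSpace ℝ (Fin n) :=
  EuclideanSpace.single i 1 - EuclideanSpace.single j 1

/-- The point `x₀`, the centroid of `J̃(9,3)`. -/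
def centroid : ℝ⁹ := WithLp.toLp 2 fun _ => 1 / 3

def x93 (i j : Fin 9) : ℝ⁹ := centroid + root i j

theorem root_apply {n : ℕ} (i j k : Fin n) :
    root i j k = (if k = i then 1 else 0) - (if k = j then 1 else 0) := by
  simp [root]

theorem x93_apply (i j k : Fin 9) :
    x93 i j k = 1 / 3 + (if k = i then 1 else 0) - (if k = j then 1 else 0) := by
  simp only [x93, centroid, PiLp.add_apply, root_apply]; ring

theorem x93_apply_self_left {i j : Fin 9} (hij : i ≠ j) : x93 i j i = 4 / 3 := by
  norm_num [x93_apply, hij]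

theorem x93_apply_self_right {i j : Fin 9} (hij : i ≠ j) : x93 i j j = -2 / 3 := by
  norm_num [x93_apply, Ne.symm hij]

theorem pointReflection_x93 (i j : Fin 9) :
    Equiv.pointReflection centroid (x93 i j) = x93 j i := by
  rw [Equiv.pointReflection_apply, x93, x93, vsub_eq_sub, vadd_eq_add, root, root]; abel

section Distances

variable {n : ℕ}

theorem inner_indicatorVec (y : EuclideanSpace ℝ (Fin n)) (A : Finset (Fin n)) :
    inner ℝ y (indicatorVec A) = ∑ k ∈ A, y k := by
  simp [PiLp.inner_apply, indicatorVec, Finset.sum_ite_mem]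

theorem norm_indicatorVec_sq (A : Finset (Fin n)) : ‖indicatorVec A‖ ^ 2 = #A := by
  rw [← real_inner_self_eq_norm_sq, inner_indicatorVec]
  simp [indicatorVec]

theorem dist_indicatorVec_sq (y : EuclideanSpace ℝ (Fin n)) (A : Finset (Fin n)) :
    dist y (indicatorVec A) ^ 2 = ‖y‖ ^ 2 + #A - 2 * ∑ k ∈ A, y k := by
  rw [dist_eq_norm, norm_sub_sq_real, inner_indicatorVec, norm_indicatorVec_sq]; ring

theorem dist_indicatorVec_indicatorVec_sq (A B : Finset (Fin n)) :
    dist (indicatorVec A) (indicatorVec B) ^ 2 = #A + #B - 2 * #(A ∩ B) := by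
  rw [dist_indicatorVec_sq, norm_indicatorVec_sq]
  simp [indicatorVec, Finset.sum_ite_mem, Finset.inter_comm]

theorem inner_root_left (i j : Fin n) (y : EuclideanSpace ℝ (Fin n)) :
    inner ℝ (root i j) y = y i - y j := by
  simp [root, inner_sub_left, EuclideanSpace.inner_single_left]

theorem inner_root_root (i j i' j' : Fin n) :
    inner ℝ (root i j) (root i' j') =
      (if i = i' then 1 else 0) - (if i = j' then 1 else 0) - (if j = i' then 1 else 0)
        + (if j = j' then 1 else 0) := by
  rw [inner_root_left, root_apply, root_apply]; ring

theorem norm_root_sq {i j : Fin n} (hij : i ≠ j) : ‖root i j‖ ^ 2 = 2 := by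
  rw [← real_inner_self_eq_norm_sq, inner_root_root]
  norm_num [hij, Ne.symm hij]

end Distances

theorem norm_centroid_sq : ‖centroid‖ ^ 2 = 1 := by
  rw [EuclideanSpace.norm_sq_eq]; norm_num [centroid]

theorem norm_x93_sq {i j : Fin 9} (hij : i ≠ j) : ‖x93 i j‖ ^ 2 = 3 := by
  rw [x93, norm_add_sq_real, norm_centroid_sq, norm_root_sq hij, real_inner_comm,
    inner_root_left]
  norm_num [centroid]

theorem dist_centroid_indicatorVec_sq {A : Finset (Fin 9)} (hA : #A = 3) :
    dist centroid (indicatorVec A) ^ 2 = 2 := by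
  rw [dist_indicatorVec_sq, norm_centroid_sq, hA]; norm_num [centroid, hA]

theorem dist_x93_centroid_sq {i j : Fin 9} (hij : i ≠ j) : dist (x93 i j) centroid ^ 2 = 2 := by
  rw [dist_eq_norm, x93, add_sub_cancel_left, norm_root_sq hij]

theorem dist_x93_indicatorVec_sq {i j : Fin 9} (hij : i ≠ j) {A : Finset (Fin 9)}
    (hA : #A = 3) : dist (x93 i j) (indicatorVec A) ^ 2 =
      4 - 2 * (if i ∈ A then 1 else 0) + 2 * (if j ∈ A then 1 else 0) := by
  rw [dist_indicatorVec_sq, norm_x93_sq hij, hA]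
  simp only [x93_apply, Finset.sum_add_distrib, Finset.sum_sub_distrib, Finset.sum_const,
    Finset.sum_ite_eq', hA, nsmul_eq_mul]
  split_ifs <;> norm_num

theorem dist_x93_x93_sq {i j i' j' : Fin 9} (hij : i ≠ j) (hij' : i' ≠ j') :
    dist (x93 i j) (x93 i' j') ^ 2 = 4 - 2 * inner ℝ (root i j) (root i' j') := by
  rw [dist_eq_norm, x93, x93, add_sub_add_left_eq_sub, norm_sub_sq_real, norm_root_sq hij,
    norm_root_sq hij']
  ring

theorem mem_johnsonRep_iff {n m : ℕ} {x : EuclideanSpace ℝ (Fin n)} :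
    x ∈ JohnsonRep n m ↔ ∃ A : Finset (Fin n), #A = m ∧ indicatorVec A = x := by
  constructor
  · rintro ⟨h01, hcard⟩
    refine ⟨Finset.univ.filter fun i => x i = 1, ?_, ?_⟩
    · rw [← hcard, ← Set.ncard_coe_finset]; simp
    · ext k
      rcases h01 k with h | h <;> simp [indicatorVec, h]
  · rintro ⟨A, rfl, rfl⟩
    refine ⟨fun i => by by_cases h : i ∈ A <;> simp [indicatorVec, h], ?_⟩
    rw [← Set.ncard_coe_finset]
    congr 1; ext i; simp [indicatorVec]

theorem indicatorVec_injective {n : ℕ} : Function.Injective (indicatorVec (n := n)) := by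
  intro A B h
  ext k
  have := congrFun (congrArg WithLp.ofLp h) k
  by_cases hA : k ∈ A <;> by_cases hB : k ∈ B <;> simp [indicatorVec, hA, hB] at this ⊢

theorem ncard_johnsonRep_9_3 : (JohnsonRep 9 3).ncard = 84 := by
  have : JohnsonRep 9 3 =
      indicatorVec '' ↑(Finset.univ.powersetCard 3 : Finset (Finset (Fin 9))) := by
    ext x; simp [mem_johnsonRep_iff]
  rw [this, Set.ncard_image_of_injective _ indicatorVec_injective, Set.ncard_coe_finset,
    Finset.card_powersetCard]
  rfl

theorem x93_level_sets {i j : Fin 9} (hij : i ≠ j) :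
    {k | x93 i j k = 4 / 3} = {i} ∧ {k | x93 i j k = 1 / 3} = {i, j}ᶜ ∧
      {k | x93 i j k = -2 / 3} = {j} := by
  refine ⟨?_, ?_, ?_⟩ <;> ext k <;> by_cases hi : k = i <;> by_cases hj : k = j <;>
    norm_num [x93_apply, hi, hj, hij, Ne.symm hij]

theorem ncard_compl_pair {n : ℕ} {i j : Fin n} (hij : i ≠ j) :
    ({i, j}ᶜ : Set (Fin n)).ncard = n - 2 := by
  rw [Set.ncard_compl, Set.ncard_pair hij, Nat.card_eq_fintype_card, Fintype.card_fin]

theorem x93_mem_X93 {i j : Fin 9} (hij : i ≠ j) : x93 i j ∈ X93 := by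
  obtain ⟨h4, h1, h2⟩ := x93_level_sets hij
  exact ⟨by rw [h4, Set.ncard_singleton], by rw [h1, ncard_compl_pair hij],
    by rw [h2, Set.ncard_singleton]⟩

theorem eq_x93_of_mem_X93 {y : ℝ⁹} (hy : y ∈ X93) {i j : Fin 9} (hi : y i = 4 / 3)
    (hj : y j = -2 / 3) : x93 i j = y := by
  obtain ⟨-, h1, -⟩ := hy
  have hij : i ≠ j := by rintro rfl; linarith
  have hthird : {k | y k = 1 / 3} = {i, j}ᶜ := by
    refine Set.eq_of_subset_of_ncard_le ?_ (by rw [h1, ncard_compl_pair hij]) (Set.toFinite _)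
    rintro k (hk : y k = 1 / 3) (rfl | rfl) <;> linarith
  ext k
  by_cases hki : k = i
  · rw [hki, hi, x93_apply_self_left hij]
  by_cases hkj : k = j
  · rw [hkj, hj, x93_apply_self_right hij]
  have hk : k ∈ {k | y k = 1 / 3} := by rw [hthird]; simp [hki, hkj]
  simp [x93_apply, hki, hkj, hk.out]

theorem x93_inj {i j i' j' : Fin 9} (hij : i ≠ j) (hij' : i' ≠ j') :
    x93 i j = x93 i' j' ↔ i = i' ∧ j = j' := by
  refine ⟨fun h => ?_, by rintro ⟨rfl, rfl⟩; rfl⟩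
  have h4 := (x93_level_sets hij).1
  have h2 := (x93_level_sets hij).2.2
  rw [h, (x93_level_sets hij').1] at h4
  rw [h, (x93_level_sets hij').2.2] at h2
  exact ⟨(Set.singleton_eq_singleton_iff.mp h4).symm,
    (Set.singleton_eq_singleton_iff.mp h2).symm⟩

theorem x93_ne_swap {i j : Fin 9} (hij : i ≠ j) : x93 i j ≠ x93 j i := by
  rw [Ne, x93_inj hij (Ne.symm hij)]; exact fun h => hij h.1

theorem mem_X93_iff {y : ℝ⁹} : y ∈ X93 ↔ ∃ i j, i ≠ j ∧ x93 i j = y := by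
  refine ⟨fun hy => ?_, by rintro ⟨i, j, hij, rfl⟩; exact x93_mem_X93 hij⟩
  obtain ⟨i, hi⟩ := Set.ncard_eq_one.mp hy.1
  obtain ⟨j, hj⟩ := Set.ncard_eq_one.mp hy.2.2
  have hyi : y i = 4 / 3 := (Set.ext_iff.mp hi i).mpr rfl
  have hyj : y j = -2 / 3 := (Set.ext_iff.mp hj j).mpr rfl
  exact ⟨i, j, by rintro rfl; linarith, eq_x93_of_mem_X93 hy hyi hyj⟩

theorem mem_X93'_iff {y : ℝ⁹} : y ∈ X93' ↔ ∃ i j : Fin 9, j < i ∧ x93 i j = y := by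
  constructor
  · rintro ⟨hy, i, j, hji, hi, hj⟩
    exact ⟨i, j, hji, eq_x93_of_mem_X93 hy hi hj⟩
  · rintro ⟨i, j, hji, rfl⟩
    exact ⟨x93_mem_X93 hji.ne', i, j, hji, x93_apply_self_left hji.ne',
      x93_apply_self_right hji.ne'⟩

theorem x93_mem_X93'_iff {i j : Fin 9} (hij : i ≠ j) : x93 i j ∈ X93' ↔ j < i := by
  refine ⟨fun h => ?_, fun h => mem_X93'_iff.mpr ⟨i, j, h, rfl⟩⟩
  obtain ⟨i', j', hlt, h⟩ := mem_X93'_iff.mp h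
  obtain ⟨rfl, rfl⟩ := (x93_inj (ne_of_gt hlt) hij).mp h
  exact hlt

theorem ncard_X93 : X93.ncard = 72 := by
  have : X93 = (fun p : Fin 9 × Fin 9 => x93 p.1 p.2) '' {p | p.1 ≠ p.2} := by
    ext y; simp [mem_X93_iff]
  rw [this, Set.InjOn.ncard_image]
  · rw [Set.ncard_eq_toFinset_card']; decide
  · rintro ⟨i, j⟩ hij ⟨i', j'⟩ hij' h
    simpa using (x93_inj hij hij').mp h

theorem centroid_notMem_johnsonRep : centroid ∉ JohnsonRep 9 3 := by
  intro h
  rcases h.1 0 with h0 | h0 <;> norm_num [centroid] at h0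

theorem x93_notMem_johnsonRep {i j : Fin 9} (hij : i ≠ j) : x93 i j ∉ JohnsonRep 9 3 := by
  intro h
  rcases h.1 j with h0 | h0 <;> norm_num [x93_apply_self_right hij] at h0

theorem x93_ne_centroid {i j : Fin 9} (hij : i ≠ j) : x93 i j ≠ centroid := by
  intro h
  have := x93_apply_self_left hij
  rw [h] at this
  norm_num [centroid] at this

theorem indicatorVec_mem_Hyp {n m : ℕ} {A : Finset (Fin n)} (hA : #A = m) :
    indicatorVec A ∈ Hyp n m := by
  simp [Hyp, indicatorVec, hA]

theorem centroid_mem_Hyp : centroid ∈ Hyp 9 3 := by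
  norm_num [Hyp, centroid]

theorem x93_mem_Hyp (i j : Fin 9) : x93 i j ∈ Hyp 9 3 := by
  norm_num [Hyp, x93_apply, Finset.sum_add_distrib, Finset.sum_sub_distrib]

/-- The distances occurring in `J̃(9,3)`: `√(6 - 2 |A ∩ B|)` for `|A ∩ B| = 2, 1, 0`. -/
def johnsonDists : Set ℝ := {√2, 2, √6}

theorem mem_johnsonDists_iff {r : ℝ} (hr : 0 ≤ r) :
    r ∈ johnsonDists ↔ r ^ 2 ∈ ({2, 4, 6} : Set ℝ) := by
  constructor
  · rintro (rfl | rfl | rfl) <;> norm_num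
  · have hr' := Real.sqrt_sq hr
    rintro (h | h | h) <;> rw [h] at hr'
    · exact .inl hr'.symm
    · refine .inr (.inl ?_)
      rw [← hr', show (4 : ℝ) = 2 ^ 2 by norm_num, Real.sqrt_sq zero_le_two]
    · exact .inr (.inr hr'.symm)

theorem johnsonDists_finite : johnsonDists.Finite := by
  simp [johnsonDists]

theorem ncard_johnsonDists : johnsonDists.ncard = 3 := by
  refine Set.ncard_eq_three.mpr ⟨_, _, _, ?_, ?_, ?_, rfl⟩ <;>
    rw [Ne, ← sq_eq_sq₀ (by positivity) (by positivity)] <;> norm_num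

section DistSet

variable {n : ℕ} {S : Set (EuclideanSpace ℝ (Fin n))} {D : Set ℝ}

theorem distSet_subset_iff : distSet S ⊆ D ↔ ∀ x ∈ S, ∀ y ∈ S, x ≠ y → dist x y ∈ D := by
  constructor
  · intro h x hx y hy hxy
    exact h ⟨x, hx, y, hy, hxy, rfl⟩
  · rintro h d ⟨x, hx, y, hy, hxy, rfl⟩
    exact h x hx y hy hxy

theorem distSet_union_singleton_subset_iff {z : EuclideanSpace ℝ (Fin n)} :
    distSet (S ∪ {z}) ⊆ D ↔ distSet S ⊆ D ∧ ∀ x ∈ S, x ≠ z → dist z x ∈ D := by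
  simp only [distSet_subset_iff, Set.mem_union, Set.mem_singleton_iff]
  constructor
  · intro h
    exact ⟨fun x hx y hy => h x (.inl hx) y (.inl hy),
      fun x hx hxz => h z (.inr rfl) x (.inl hx) (Ne.symm hxz)⟩
  · rintro ⟨hS, hz⟩ x (hx | rfl) y (hy | rfl) hxy
    · exact hS x hx y hy hxy
    · rw [dist_comm]; exact hz x hx hxy
    · exact hz y hy (Ne.symm hxy)
    · exact absurd rfl hxy

end DistSet

theorem dist_indicatorVec_mem_johnsonDists {n : ℕ} {A B : Finset (Fin n)} (hA : #A = 3)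
    (hB : #B = 3) (hAB : A ≠ B) : dist (indicatorVec A) (indicatorVec B) ∈ johnsonDists := by
  have hlt : #(A ∩ B) < 3 := by
    refine (hA ▸ Finset.card_le_card Finset.inter_subset_left).lt_of_ne fun h => hAB ?_
    have hsub : A ⊆ B := Finset.inter_eq_left.mp
      (Finset.eq_of_subset_of_card_le Finset.inter_subset_left (by rw [h, hA]))
    exact Finset.eq_of_subset_of_card_le hsub (by rw [hA, hB])
  rw [mem_johnsonDists_iff dist_nonneg, dist_indicatorVec_indicatorVec_sq, hA, hB]
  interval_cases #(A ∩ B) <;> norm_num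

theorem johnsonDists_subset_distSet : johnsonDists ⊆ distSet (JohnsonRep 9 3) := by
  have hmem (B : Finset (Fin 9)) (hB : #B = 3) (hne : {0, 1, 2} ≠ B) (d : ℝ) (hd : 0 ≤ d)
      (hsq : d ^ 2 = 6 - 2 * #({0, 1, 2} ∩ B)) : d ∈ distSet (JohnsonRep 9 3) := by
    refine ⟨_, mem_johnsonRep_iff.mpr ⟨{0, 1, 2}, rfl, rfl⟩, _,
      mem_johnsonRep_iff.mpr ⟨B, hB, rfl⟩, indicatorVec_injective.ne hne, ?_⟩
    rw [← sq_eq_sq₀ hd dist_nonneg, dist_indicatorVec_indicatorVec_sq, hsq, hB,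
      show #({0, 1, 2} : Finset (Fin 9)) = 3 from rfl]
    norm_num
  rintro d (rfl | rfl | rfl)
  · exact hmem {0, 1, 3} rfl (by decide) _ (by positivity)
      (by rw [show #({0, 1, 2} ∩ {0, 1, 3} : Finset (Fin 9)) = 2 from rfl]; norm_num)
  · exact hmem {0, 3, 4} rfl (by decide) _ (by positivity)
      (by rw [show #({0, 1, 2} ∩ {0, 3, 4} : Finset (Fin 9)) = 1 from rfl]; norm_num)
  · exact hmem {3, 4, 5} rfl (by decide) _ (by positivity)
      (by rw [show #({0, 1, 2} ∩ {3, 4, 5} : Finset (Fin 9)) = 0 from rfl]; norm_num)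

theorem isSDistanceSet_three_iff {S : Set ℝ⁹} (hJ : JohnsonRep 9 3 ⊆ S) :
    IsSDistanceSet 3 S ↔ distSet S ⊆ johnsonDists := by
  have hsub : johnsonDists ⊆ distSet S := johnsonDists_subset_distSet.trans
    fun d ⟨x, hx, y, hy, hxy, hd⟩ => ⟨x, hJ hx, y, hJ hy, hxy, hd⟩
  constructor
  · rintro ⟨hfin, hcard⟩
    exact (Set.eq_of_subset_of_ncard_le hsub (by rw [hcard, ncard_johnsonDists]) hfin).ge
  · intro h
    rw [IsSDistanceSet, h.antisymm hsub]
    exact ⟨johnsonDists_finite, ncard_johnsonDists⟩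

theorem dist_centroid_indicatorVec_mem_johnsonDists {A : Finset (Fin 9)} (hA : #A = 3) :
    dist centroid (indicatorVec A) ∈ johnsonDists := by
  rw [mem_johnsonDists_iff dist_nonneg, dist_centroid_indicatorVec_sq hA]; norm_num

theorem dist_x93_centroid_mem_johnsonDists {i j : Fin 9} (hij : i ≠ j) :
    dist (x93 i j) centroid ∈ johnsonDists := by
  rw [mem_johnsonDists_iff dist_nonneg, dist_x93_centroid_sq hij]; norm_num

theorem dist_x93_indicatorVec_mem_johnsonDists {i j : Fin 9} (hij : i ≠ j)
    {A : Finset (Fin 9)} (hA : #A = 3) : dist (x93 i j) (indicatorVec A) ∈ johnsonDists := by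
  rw [mem_johnsonDists_iff dist_nonneg, dist_x93_indicatorVec_sq hij hA]
  split_ifs <;> norm_num

theorem dist_x93_x93_mem_johnsonDists {i j i' j' : Fin 9} (hij : i ≠ j) (hij' : i' ≠ j')
    (hne : x93 i j ≠ x93 i' j') (hswap : x93 j i ≠ x93 i' j') :
    dist (x93 i j) (x93 i' j') ∈ johnsonDists := by
  rw [Ne, x93_inj hij hij'] at hne
  rw [Ne, x93_inj (Ne.symm hij) hij'] at hswap
  rw [mem_johnsonDists_iff dist_nonneg, dist_x93_x93_sq hij hij', inner_root_root]
  split_ifs <;> norm_num <;> simp_all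

theorem dist_x93_swap_notMem_johnsonDists {i j : Fin 9} (hij : i ≠ j) :
    dist (x93 i j) (x93 j i) ∉ johnsonDists := by
  rw [mem_johnsonDists_iff dist_nonneg, dist_x93_x93_sq hij (Ne.symm hij), inner_root_root]
  norm_num [hij, Ne.symm hij]

theorem dist_mem_johnsonDists {p q : ℝ⁹} (hp : p ∈ JohnsonRep 9 3 ∪ {centroid} ∪ X93)
    (hq : q ∈ JohnsonRep 9 3 ∪ {centroid} ∪ X93) (hpq : p ≠ q)
    (hswap : ∀ i j, i ≠ j → x93 i j = p → x93 j i ≠ q) : dist p q ∈ johnsonDists := by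
  rcases hp with (hp | rfl) | hp <;> rcases hq with (hq | rfl) | hq
  · obtain ⟨A, hA, rfl⟩ := mem_johnsonRep_iff.mp hp
    obtain ⟨B, hB, rfl⟩ := mem_johnsonRep_iff.mp hq
    exact dist_indicatorVec_mem_johnsonDists hA hB (ne_of_apply_ne _ hpq)
  · obtain ⟨A, hA, rfl⟩ := mem_johnsonRep_iff.mp hp
    exact dist_comm centroid _ ▸ dist_centroid_indicatorVec_mem_johnsonDists hA
  · obtain ⟨A, hA, rfl⟩ := mem_johnsonRep_iff.mp hp
    obtain ⟨i, j, hij, rfl⟩ := mem_X93_iff.mp hq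
    exact dist_comm (x93 i j) _ ▸ dist_x93_indicatorVec_mem_johnsonDists hij hA
  · obtain ⟨B, hB, rfl⟩ := mem_johnsonRep_iff.mp hq
    exact dist_centroid_indicatorVec_mem_johnsonDists hB
  · exact absurd rfl hpq
  · obtain ⟨i, j, hij, rfl⟩ := mem_X93_iff.mp hq
    exact dist_comm (x93 i j) _ ▸ dist_x93_centroid_mem_johnsonDists hij
  · obtain ⟨i, j, hij, rfl⟩ := mem_X93_iff.mp hp
    obtain ⟨B, hB, rfl⟩ := mem_johnsonRep_iff.mp hq
    exact dist_x93_indicatorVec_mem_johnsonDists hij hB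
  · obtain ⟨i, j, hij, rfl⟩ := mem_X93_iff.mp hp
    exact dist_x93_centroid_mem_johnsonDists hij
  · obtain ⟨i, j, hij, rfl⟩ := mem_X93_iff.mp hp
    obtain ⟨i', j', hij', rfl⟩ := mem_X93_iff.mp hq
    exact dist_x93_x93_mem_johnsonDists hij hij' hpq (hswap i j hij rfl)

theorem exists_notMem_of_card_lt {n : ℕ} {s : Finset (Fin n)} (h : #s < n) : ∃ k, k ∉ s := by
  obtain ⟨k, -, hk⟩ := Finset.exists_mem_notMem_of_card_lt_card (s := s) (t := Finset.univ)
    (by rwa [Finset.card_univ, Fintype.card_fin])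
  exact ⟨k, hk⟩

def TripleSumsIn (y : ℝ⁹) (a : ℝ) : Prop :=
  ∀ i j l : Fin 9, i ≠ j → i ≠ l → j ≠ l → y i + y j + y l ∈ ({a, a - 1, a - 2} : Set ℝ)

namespace TripleSumsIn

variable {y : ℝ⁹} {a : ℝ}

theorem sub_mem (h : TripleSumsIn y a) (i j : Fin 9) :
    y i - y j ∈ ({-2, -1, 0, 1, 2} : Set ℝ) := by
  by_cases hij : i = j
  · simp [hij]
  obtain ⟨c, hc⟩ := exists_notMem_of_card_lt (s := {i, j})
    (Finset.card_le_two.trans_lt (by norm_num))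
  obtain ⟨d, hd⟩ := exists_notMem_of_card_lt (s := {i, j, c})
    (Finset.card_le_three.trans_lt (by norm_num))
  simp only [Finset.mem_insert, Finset.mem_singleton, not_or] at hc hd
  have hi := h i c d (Ne.symm hc.1) (Ne.symm hd.1) (Ne.symm hd.2.2)
  have hj := h j c d (Ne.symm hc.2) (Ne.symm hd.2.1) (Ne.symm hd.2.2)
  rw [show y i - y j = (y i + y c + y d) - (y j + y c + y d) by ring]
  simp only [Set.mem_insert_iff, Set.mem_singleton_iff] at hi hj
  rcases hi with hi | hi | hi <;> rcases hj with hj | hj | hj <;> rw [hi, hj] <;> norm_num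

theorem three_mul_mem (h : TripleSumsIn y a) {s : Finset (Fin 9)} (hs : 3 ≤ #s) {c : ℝ}
    (hc : ∀ i ∈ s, y i = c) : 3 * c ∈ ({a, a - 1, a - 2} : Set ℝ) := by
  obtain ⟨i, j, l, hi, hj, hl, hij, hil, hjl⟩ := Finset.two_lt_card_iff.mp hs
  have := h i j l hij hil hjl
  rwa [hc i hi, hc j hj, hc l hl, show c + c + c = 3 * c by ring] at this

/-- With `t` coordinates equal to `m + 1` and `9 - t` equal to `m`: for `3 ≤ t ≤ 6` the triple
sums `3m` and `3m + 3` both occur, which are too far apart; otherwise `∑ y_k = 3` and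
`∑ y_k² = 2a - 1` fix `m` and `a`, and the constant triple sum `3m` or `3m + 3` misses
`{a, a - 1, a - 2}`. -/
theorem false_of_two_valued (h : TripleSumsIn y a) (hsum : ∑ k, y k = 3)
    (hsq : ∑ k, y k ^ 2 = 2 * a - 1) {m : ℝ} (hy : ∀ i, y i = m ∨ y i = m + 1) {k l : Fin 9}
    (hk : y k = m + 1) (hl : y l = m) : False := by
  set s := Finset.univ.filter fun i => y i = m + 1
  have hs : ∀ i ∈ s, y i = m + 1 := fun i hi => (Finset.mem_filter.mp hi).2
  have hsc : ∀ i ∈ sᶜ, y i = m := fun i hi =>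
    (hy i).resolve_right (by simpa [s] using hi)
  have hsplit (f : ℝ → ℝ) : ∑ i, f (y i) = #s * f (m + 1) + #sᶜ * f m := by
    rw [← Finset.sum_add_sum_compl s, Finset.sum_congr rfl fun i hi => congrArg f (hs i hi),
      Finset.sum_congr rfl fun i hi => congrArg f (hsc i hi)]
    simp
  have hcard : #s + #sᶜ = 9 := Finset.card_add_card_compl s
  have hks : 1 ≤ #s := Finset.card_pos.mpr ⟨k, by simp [s, hk]⟩
  have hls : 1 ≤ #sᶜ := Finset.card_pos.mpr ⟨l, by simp [s, hl]⟩
  have htop : 3 ≤ #s → 3 * (m + 1) ∈ ({a, a - 1, a - 2} : Set ℝ) :=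
    fun h3 => h.three_mul_mem h3 hs
  have hbot : 3 ≤ #sᶜ → 3 * m ∈ ({a, a - 1, a - 2} : Set ℝ) :=
    fun h3 => h.three_mul_mem h3 hsc
  replace hsum := (hsplit id).symm.trans hsum
  replace hsq := (hsplit (· ^ 2)).symm.trans hsq
  simp only [id, Set.mem_insert_iff, Set.mem_singleton_iff] at hsum hsq htop hbot
  clear_value s
  generalize #s = t at *
  generalize #sᶜ = u at *
  obtain rfl : u = 9 - t := by omega
  have ht8 : t ≤ 8 := by omega
  interval_cases t <;> norm_num at hsum hsq htop hbot hls
  all_goals first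
    | rcases hbot with h | h | h <;> nlinarith
    | rcases htop with h | h | h <;> nlinarith

/-- The triple sums through `k` and through `l` differ by `2`, so they are `a` and `a - 2`. -/
theorem add_add_eq_of_sub_eq_two (h : TripleSumsIn y a) {k l : Fin 9} (hkl : y k - y l = 2)
    {p r : Fin 9} (hpr : p ≠ r) (hpk : p ≠ k) (hpl : p ≠ l) (hrk : r ≠ k) (hrl : r ≠ l) :
    y k + y p + y r = a := by
  have hk := h k p r (Ne.symm hpk) (Ne.symm hrk) hpr
  have hl := h l p r (Ne.symm hpl) (Ne.symm hrl) hpr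
  simp only [Set.mem_insert_iff, Set.mem_singleton_iff] at hk hl
  rcases hk with hk | hk | hk <;> rcases hl with hl | hl | hl <;> linarith

theorem two_mul_eq_of_sub_eq_two (h : TripleSumsIn y a) {k l : Fin 9} (hkl : y k - y l = 2)
    {p : Fin 9} (hpk : p ≠ k) (hpl : p ≠ l) : y k + 2 * y p = a := by
  obtain ⟨r, hr⟩ := exists_notMem_of_card_lt (s := {k, l, p})
    (Finset.card_le_three.trans_lt (by norm_num))
  obtain ⟨q, hq⟩ := exists_notMem_of_card_lt (s := {k, l, p, r})
    (Finset.card_le_four.trans_lt (by norm_num))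
  simp only [Finset.mem_insert, Finset.mem_singleton, not_or] at hr hq
  have hpr := h.add_add_eq_of_sub_eq_two hkl (Ne.symm hr.2.2) hpk hpl hr.1 hr.2.1
  have hpq := h.add_add_eq_of_sub_eq_two hkl (Ne.symm hq.2.2.1) hpk hpl hq.1 hq.2.1
  have hrq := h.add_add_eq_of_sub_eq_two hkl (Ne.symm hq.2.2.2) hr.1 hr.2.1 hq.1 hq.2.1
  linarith

theorem x93_eq_of_sub_eq_two (h : TripleSumsIn y a) (hsum : ∑ k, y k = 3)
    (hsq : ∑ k, y k ^ 2 = 2 * a - 1) {k l : Fin 9} (hkl : y k - y l = 2) : x93 k l = y := by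
  have hne : k ≠ l := by rintro rfl; simp at hkl
  obtain ⟨c, hkc⟩ : ∃ c, y k + 2 * c = a := ⟨(a - y k) / 2, by ring⟩
  have hc : ∀ p ∈ ({k, l}ᶜ : Finset (Fin 9)), y p = c := fun p hp => by
    simp only [Finset.mem_compl, Finset.mem_insert, Finset.mem_singleton, not_or] at hp
    linarith [h.two_mul_eq_of_sub_eq_two hkl hp.1 hp.2]
  have hcard : #({k, l}ᶜ : Finset (Fin 9)) = 7 := by
    rw [Finset.card_compl, Finset.card_pair hne, Fintype.card_fin]
  have hsplit (f : ℝ → ℝ) : ∑ i, f (y i) = f (y k) + f (y l) + 7 * f c := by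
    rw [← Finset.sum_add_sum_compl {k, l}, Finset.sum_pair hne,
      Finset.sum_congr rfl fun i hi => congrArg f (hc i hi), Finset.sum_const, hcard,
      nsmul_eq_mul, Nat.cast_ofNat]
  replace hsum := (hsplit id).symm.trans hsum
  replace hsq := (hsplit (· ^ 2)).symm.trans hsq
  have h3 := h.three_mul_mem (by rw [hcard]; norm_num) hc
  simp only [id, Set.mem_insert_iff, Set.mem_singleton_iff] at hsum hsq h3
  obtain ⟨hk, rfl⟩ : y k = 4 / 3 ∧ c = 1 / 3 := by
    rcases h3 with h3 | h3 | h3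
    · nlinarith
    · constructor <;> linarith
    · nlinarith
  ext p
  by_cases hpk : p = k
  · rw [hpk, x93_apply_self_left hne, hk]
  by_cases hpl : p = l
  · rw [hpl, x93_apply_self_right hne]; linarith
  rw [hc p (by simp [hpk, hpl])]
  simp [x93_apply, hpk, hpl]

theorem eq_centroid_or_mem_X93 (h : TripleSumsIn y a) (hsum : ∑ k, y k = 3)
    (hsq : ∑ k, y k ^ 2 = 2 * a - 1) : y = centroid ∨ y ∈ X93 := by
  obtain ⟨k, hk⟩ := Finite.exists_max fun i => y i
  obtain ⟨l, hl⟩ := Finite.exists_min fun i => y i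
  have hgap := h.sub_mem k l
  simp only [Set.mem_insert_iff, Set.mem_singleton_iff] at hgap
  rcases hgap with hkl | hkl | hkl | hkl | hkl
  · linarith [hl k]
  · linarith [hl k]
  · have hconst : ∀ i, y i = y k := fun i => by linarith [hk i, hl i]
    simp only [hconst, Finset.sum_const, Finset.card_univ, Fintype.card_fin, nsmul_eq_mul,
      Nat.cast_ofNat] at hsum
    left; ext i
    rw [hconst i]; simp only [centroid]; linarith
  · refine (h.false_of_two_valued hsum hsq (m := y l) (fun i => ?_) (k := k) (by linarith)
      rfl).elim
    have hi := h.sub_mem i l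
    simp only [Set.mem_insert_iff, Set.mem_singleton_iff] at hi
    have := hk i; have := hl i
    rcases hi with hi | hi | hi | hi | hi
    all_goals first | (left; linarith) | (right; linarith)
  · exact .inr (mem_X93_iff.mpr
      ⟨k, l, by rintro rfl; simp at hkl, h.x93_eq_of_sub_eq_two hsum hsq hkl⟩)

end TripleSumsIn

theorem tripleSumsIn_of_dist_indicatorVec {y : ℝ⁹}
    (h : ∀ A : Finset (Fin 9), #A = 3 → dist y (indicatorVec A) ∈ johnsonDists) :
    TripleSumsIn y ((‖y‖ ^ 2 + 1) / 2) := by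
  intro i j l hij hil hjl
  have hA : #({i, j, l} : Finset (Fin 9)) = 3 :=
    Finset.card_eq_three.mpr ⟨i, j, l, hij, hil, hjl, rfl⟩
  have hd := (mem_johnsonDists_iff dist_nonneg).mp (h _ hA)
  rw [dist_indicatorVec_sq, hA, Finset.sum_insert (by simp [hij, hil]),
    Finset.sum_pair hjl] at hd
  simp only [Nat.cast_ofNat, Set.mem_insert_iff, Set.mem_singleton_iff] at hd ⊢
  rcases hd with hd | hd | hd
  · left; linarith
  · right; left; linarith
  · right; right; linarith

theorem eq_centroid_or_mem_X93_of_dist {y : ℝ⁹} (hy : y ∈ Hyp 9 3)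
    (h : ∀ A : Finset (Fin 9), #A = 3 → dist y (indicatorVec A) ∈ johnsonDists) :
    y = centroid ∨ y ∈ X93 := by
  refine (tripleSumsIn_of_dist_indicatorVec h).eq_centroid_or_mem_X93
    (by simpa [Hyp] using hy) ?_
  simp only [EuclideanSpace.norm_sq_eq, Real.norm_eq_abs, sq_abs]; ring

theorem subset_of_distSet_subset {T : Set ℝ⁹} (hJ : JohnsonRep 9 3 ⊆ T) (hH : T ⊆ Hyp 9 3)
    (hT : distSet T ⊆ johnsonDists) : T ⊆ JohnsonRep 9 3 ∪ {centroid} ∪ X93 := by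
  intro y hy
  by_cases hyJ : y ∈ JohnsonRep 9 3
  · exact .inl (.inl hyJ)
  refine (eq_centroid_or_mem_X93_of_dist (hH hy) fun A hA => ?_).elim (.inl ∘ .inr) .inr
  have hAJ : indicatorVec A ∈ JohnsonRep 9 3 := mem_johnsonRep_iff.mpr ⟨A, hA, rfl⟩
  exact distSet_subset_iff.mp hT y hy _ (hJ hAJ) (by rintro rfl; exact hyJ hAJ)

theorem ncard_johnsonRep_union_centroid_union {B : Set ℝ⁹} (hB : B ⊆ X93) :
    (JohnsonRep 9 3 ∪ {centroid} ∪ B).ncard = 85 + B.ncard := by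
  have hJfin : (JohnsonRep 9 3).Finite :=
    Set.finite_of_ncard_ne_zero (by rw [ncard_johnsonRep_9_3]; norm_num)
  have hBfin : B.Finite := (Set.finite_of_ncard_ne_zero (by rw [ncard_X93]; norm_num)).subset hB
  have hdisj : Disjoint (JohnsonRep 9 3 ∪ {centroid}) B := by
    rw [Set.disjoint_right]
    intro y hy
    obtain ⟨i, j, hij, rfl⟩ := mem_X93_iff.mp (hB hy)
    rintro (h | h)
    · exact x93_notMem_johnsonRep hij h
    · exact x93_ne_centroid hij h
  rw [Set.ncard_union_eq hdisj (hJfin.union (Set.finite_singleton _)) hBfin,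
    Set.union_singleton, Set.ncard_insert_of_notMem centroid_notMem_johnsonRep hJfin,
    ncard_johnsonRep_9_3]

theorem two_mul_ncard_eq {α : Type*} {A X : Set α} (σ : α ≃ α) (hdisj : Disjoint A (σ '' A))
    (hunion : A ∪ σ '' A = X) (hX : X.Finite) : 2 * A.ncard = X.ncard := by
  have hA : A.Finite := hX.subset (hunion ▸ Set.subset_union_left)
  rw [← hunion, Set.ncard_union_eq hdisj hA (hA.image σ),
    Set.ncard_image_of_injective _ σ.injective]
  ring

theorem ncard_inter_X93 {T : Set ℝ⁹} (hno : ∀ i j, i ≠ j → x93 i j ∈ T → x93 j i ∉ T)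
    (hor : ∀ i j, i ≠ j → x93 i j ∈ T ∨ x93 j i ∈ T) : (T ∩ X93).ncard = 36 := by
  suffices 2 * (T ∩ X93).ncard = X93.ncard by rw [ncard_X93] at this; omega
  refine two_mul_ncard_eq (Equiv.pointReflection centroid) ?_ ?_
    (Set.finite_of_ncard_ne_zero (by rw [ncard_X93]; norm_num))
  · rw [Set.disjoint_left]
    rintro _ ⟨hyT, hy⟩ ⟨_, ⟨hxT, hx⟩, rfl⟩
    obtain ⟨i, j, hij, rfl⟩ := mem_X93_iff.mp hx
    rw [pointReflection_x93] at hyT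
    exact hno i j hij hxT hyT
  · ext y
    constructor
    · rintro (⟨-, hy⟩ | ⟨_, ⟨-, hx⟩, rfl⟩)
      · exact hy
      · obtain ⟨i, j, hij, rfl⟩ := mem_X93_iff.mp hx
        rw [pointReflection_x93]; exact x93_mem_X93 (Ne.symm hij)
    · intro hy
      obtain ⟨i, j, hij, rfl⟩ := mem_X93_iff.mp hy
      rcases hor i j hij with h | h
      · exact .inl ⟨h, hy⟩
      · exact .inr ⟨x93 j i, ⟨h, x93_mem_X93 (Ne.symm hij)⟩, pointReflection_x93 j i⟩

theorem ncard_eq_121_of_maximal {T : Set ℝ⁹} (hJ : JohnsonRep 9 3 ⊆ T) (hH : T ⊆ Hyp 9 3)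
    (hT : IsSDistanceSet 3 T) (hmax : ¬∃ y ∈ Hyp 9 3 \ T, IsSDistanceSet 3 (T ∪ {y})) :
    T.ncard = 121 := by
  rw [isSDistanceSet_three_iff hJ] at hT
  have hU := subset_of_distSet_subset hJ hH hT
  have hadd : ∀ z ∈ JohnsonRep 9 3 ∪ {centroid} ∪ X93, z ∈ Hyp 9 3 → z ∉ T →
      (∀ i j, i ≠ j → x93 i j = z → x93 j i ∉ T) → False := by
    intro z hz hzH hzT hswap
    refine hmax ⟨z, ⟨hzH, hzT⟩, ?_⟩
    rw [isSDistanceSet_three_iff (hJ.trans Set.subset_union_left),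
      distSet_union_singleton_subset_iff]
    exact ⟨hT, fun x hx hxz => dist_mem_johnsonDists hz (hU hx) (Ne.symm hxz)
      fun i j hij hz' hx' => hswap i j hij hz' (hx' ▸ hx)⟩
  have hc : centroid ∈ T := by
    by_contra h
    exact hadd _ (.inl (.inr rfl)) centroid_mem_Hyp h
      fun i j hij h' => absurd h' (x93_ne_centroid hij)
  have hor : ∀ i j, i ≠ j → x93 i j ∈ T ∨ x93 j i ∈ T := by
    intro i j hij
    by_contra! h
    refine hadd _ (.inr (x93_mem_X93 hij)) (x93_mem_Hyp i j) h.1 fun i' j' hij' h' => ?_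
    obtain ⟨rfl, rfl⟩ := (x93_inj hij' hij).mp h'
    exact h.2
  have hno : ∀ i j, i ≠ j → x93 i j ∈ T → x93 j i ∉ T := fun i j hij h1 h2 =>
    dist_x93_swap_notMem_johnsonDists hij
      (distSet_subset_iff.mp hT _ h1 _ h2 (x93_ne_swap hij))
  have hT : T = JohnsonRep 9 3 ∪ {centroid} ∪ (T ∩ X93) := by
    refine (Set.union_subset (Set.union_subset hJ (Set.singleton_subset_iff.mpr hc))
      Set.inter_subset_left).antisymm' fun y hy => ?_
    rcases hU hy with hy' | hy'
    · exact .inl hy'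
    · exact .inr ⟨hy, hy'⟩
  rw [hT, ncard_johnsonRep_union_centroid_union Set.inter_subset_right, ncard_inter_X93 hno hor]

def maximalExtension : Set ℝ⁹ := JohnsonRep 9 3 ∪ {centroid} ∪ X93'

theorem johnsonRep_subset_maximalExtension : JohnsonRep 9 3 ⊆ maximalExtension :=
  Set.subset_union_left.trans Set.subset_union_left

theorem maximalExtension_subset : maximalExtension ⊆ JohnsonRep 9 3 ∪ {centroid} ∪ X93 :=
  Set.union_subset_union_right _ fun _ hy => hy.1

theorem maximalExtension_subset_Hyp : maximalExtension ⊆ Hyp 9 3 := by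
  rintro y ((hy | rfl) | hy)
  · obtain ⟨A, hA, rfl⟩ := mem_johnsonRep_iff.mp hy
    exact indicatorVec_mem_Hyp hA
  · exact centroid_mem_Hyp
  · obtain ⟨i, j, -, rfl⟩ := mem_X93'_iff.mp hy
    exact x93_mem_Hyp i j

theorem x93_mem_maximalExtension_iff {i j : Fin 9} (hij : i ≠ j) :
    x93 i j ∈ maximalExtension ↔ j < i := by
  rw [← x93_mem_X93'_iff hij, maximalExtension]
  simp [x93_notMem_johnsonRep hij, x93_ne_centroid hij]

theorem distSet_maximalExtension_subset : distSet maximalExtension ⊆ johnsonDists := by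
  refine distSet_subset_iff.mpr fun p hp q hq hpq => dist_mem_johnsonDists
    (maximalExtension_subset hp) (maximalExtension_subset hq) hpq fun i j hij hp' hq' => ?_
  subst hp' hq'
  exact lt_asymm ((x93_mem_maximalExtension_iff hij).mp hp)
    ((x93_mem_maximalExtension_iff (Ne.symm hij)).mp hq)

theorem maximalExtension_isMaximal :
    ¬∃ y ∈ Hyp 9 3 \ maximalExtension, IsSDistanceSet 3 (maximalExtension ∪ {y}) := by
  rintro ⟨y, ⟨hyH, hyS⟩, hy⟩
  have hJ := johnsonRep_subset_maximalExtension.trans (Set.subset_union_left (t := {y}))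
  rw [isSDistanceSet_three_iff hJ] at hy
  have hH := Set.union_subset maximalExtension_subset_Hyp (Set.singleton_subset_iff.mpr hyH)
  rcases subset_of_distSet_subset hJ hH hy (.inr rfl) with (hyJ | hyc) | hyX
  · exact hyS (.inl (.inl hyJ))
  · exact hyS (.inl (.inr hyc))
  obtain ⟨i, j, hij, rfl⟩ := mem_X93_iff.mp hyX
  have hlt : i < j :=
    lt_of_le_of_ne (not_lt.mp ((x93_mem_maximalExtension_iff hij).not.mp hyS)) hij
  have hji : x93 j i ∈ maximalExtension := (x93_mem_maximalExtension_iff (Ne.symm hij)).mpr hlt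
  exact dist_x93_swap_notMem_johnsonDists hij
    (distSet_subset_iff.mp hy _ (.inr rfl) _ (.inl hji) (x93_ne_swap hij))

theorem maximal_three_distance_J93 (x0 : EuclideanSpace ℝ (Fin 9)) (hx0 : ∀ i, x0 i = 1/3) :
    (JohnsonRep 9 3 ∪ {x0} ∪ X93') ⊆ Hyp 9 3 ∧
    IsSDistanceSet 3 (JohnsonRep 9 3 ∪ {x0} ∪ X93') ∧
    (¬∃ y ∈ Hyp 9 3 \ (JohnsonRep 9 3 ∪ {x0} ∪ X93'),
      IsSDistanceSet 3 (JohnsonRep 9 3 ∪ {x0} ∪ X93' ∪ {y})) ∧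
    (JohnsonRep 9 3 ∪ {x0} ∪ X93').ncard = 121 ∧
    (∀ T : Set (EuclideanSpace ℝ (Fin 9)), JohnsonRep 9 3 ⊆ T → T ⊆ Hyp 9 3 →
      IsSDistanceSet 3 T →
      (¬∃ y ∈ Hyp 9 3 \ T, IsSDistanceSet 3 (T ∪ {y})) →
      T.ncard = 121) := by
  obtain rfl : x0 = centroid := by ext i; simp [hx0, centroid]
  have hS : IsSDistanceSet 3 maximalExtension :=
    (isSDistanceSet_three_iff johnsonRep_subset_maximalExtension).mpr
      distSet_maximalExtension_subset
  exact ⟨maximalExtension_subset_Hyp, hS, maximalExtension_isMaximal,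
    ncard_eq_121_of_maximal johnsonRep_subset_maximalExtension maximalExtension_subset_Hyp hS
      maximalExtension_isMaximal,
    fun _ => ncard_eq_121_of_maximal⟩
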